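/- arXiv:2303.07681 — 2 statements merged into one kernel-verified Lean document; each statement's English description precedes it below -/
import Mathlib

section
/- Let Γ be a finite connected (G,2)-geodesic-transitive digraph that is not (G,2)-arc-transitive, and let N be a normal subgroup of G maximal with respect to having at least 2 orbits on V(Γ). Then G/N is quasiprimitive on the vertex set of the quotient digraph Γ_N, and Γ_N is either a connected (G/N,2)-geodesic-transitive digraph or a connected G/N-arc-transitive undirected complete graph. -/
namespace SGeodesicDigraph

variable {V : Type*}

/-- `p : Fin (n+1) → V` is an `n`-arc of the digraph with adjacency relation `A`. -/
def IsArcSeq (A : V → V → Prop) (n : ℕ) (p : Fin (n + 1) → V) : Prop :=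
  ∀ i : Fin n, A (p i.castSucc) (p i.succ)

/-- The directed distance from `u` to `v`: the length of a shortest directed path. -/
noncomputable def ddist (A : V → V → Prop) (u v : V) : ℕ :=
  sInf {n : ℕ | ∃ p : Fin (n + 1) → V, IsArcSeq A n p ∧ p 0 = u ∧ p (Fin.last n) = v}

/-- `p` is an `n`-geodesic: an `n`-arc whose endpoints are at directed distance `n`. -/
def IsGeodesic (A : V → V → Prop) (n : ℕ) (p : Fin (n + 1) → V) : Prop :=
  IsArcSeq A n p ∧ ddist A (p 0) (p (Fin.last n)) = n

/-- Connectivity of the underlying undirected graph. -/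
def DConnected (A : V → V → Prop) : Prop :=
  ∀ u v : V, Relation.ReflTransGen (fun x y => A x y ∨ A y x) u v

/-- The diameter: the maximum of the directed distances. -/
noncomputable def diam (A : V → V → Prop) : ℕ :=
  sSup {d : ℕ | ∃ u v : V, ddist A u v = d}

/-- The subgroup `G` of permutations of the vertices consists of automorphisms of `A`. -/
def AutActs (A : V → V → Prop) (G : Subgroup (Equiv.Perm V)) : Prop :=
  ∀ g ∈ G, ∀ u v : V, A u v ↔ A (g u) (g v)

/-- `G` is transitive on the arcs. -/
def ArcTrans (A : V → V → Prop) (G : Subgroup (Equiv.Perm V)) : Prop :=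
  ∀ u v x y : V, A u v → A x y → ∃ g ∈ G, g u = x ∧ g v = y

/-- `G` is transitive on the 2-arcs. -/
def TwoArcTrans (A : V → V → Prop) (G : Subgroup (Equiv.Perm V)) : Prop :=
  ∀ u v w u' v' w' : V, A u v → A v w → A u' v' → A v' w' →
    ∃ g ∈ G, g u = u' ∧ g v = v' ∧ g w = w'

/-- `Γ` is `(G,s)`-geodesic-transitive: `G` is transitive on the `i`-geodesics for all `i ≤ s`. -/
def GeoTrans (A : V → V → Prop) (G : Subgroup (Equiv.Perm V)) (s : ℕ) : Prop :=
  ∀ i ≤ s, ∀ p q : Fin (i + 1) → V, IsGeodesic A i p → IsGeodesic A i q →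
    ∃ g ∈ G, ∀ j : Fin (i + 1), g (p j) = q j

/-- every vertex has `k` out-neighbours and `k` in-neighbours. -/
def HasValency (A : V → V → Prop) (k : ℕ) : Prop :=
  ∀ v : V, {u : V | A v u}.ncard = k ∧ {u : V | A u v}.ncard = k

/-- The digraph is a circuit (a directed cycle) on `r ≥ 3` vertices. -/
def IsCircuit (A : V → V → Prop) : Prop :=
  ∃ r : ℕ, 3 ≤ r ∧ ∃ e : ZMod r ≃ V, ∀ i j : ZMod r, A (e i) (e j) ↔ j = i + 1

/-- `u` and `v` lie in the same `N`-orbit. -/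
def SameOrb (N : Subgroup (Equiv.Perm V)) (u v : V) : Prop := ∃ n ∈ N, n u = v

/-- `N` is transitive on the vertex set. -/
def SubTrans (N : Subgroup (Equiv.Perm V)) : Prop := ∀ u v : V, SameOrb N u v

/-- `N` is regular on the vertex set: transitive with trivial point stabilizers. -/
def SubRegular (N : Subgroup (Equiv.Perm V)) : Prop :=
  SubTrans N ∧ ∀ n ∈ N, ∀ v : V, n v = v → n = 1

/-- `N` is a normal subgroup of `G`. -/
def NormalIn (N G : Subgroup (Equiv.Perm V)) : Prop :=
  N ≤ G ∧ ∀ g ∈ G, ∀ n ∈ N, g * n * g⁻¹ ∈ N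

/-- `N` has at least three orbits on the vertex set. -/
def AtLeastThreeOrbits (N : Subgroup (Equiv.Perm V)) : Prop :=
  ∃ u v w : V, ¬ SameOrb N u v ∧ ¬ SameOrb N u w ∧ ¬ SameOrb N v w

/-- `N` has at most two orbits on the vertex set. -/
def AtMostTwoOrbits (N : Subgroup (Equiv.Perm V)) : Prop :=
  ∃ u v : V, ∀ w : V, SameOrb N u w ∨ SameOrb N v w

/-- `N` has exactly two orbits on the vertex set. -/
def ExactlyTwoOrbits (N : Subgroup (Equiv.Perm V)) : Prop :=
  AtMostTwoOrbits N ∧ ¬ SubTrans N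

/-- The `N`-orbit of `v`. -/
def orb (N : Subgroup (Equiv.Perm V)) (v : V) : Set V := {u : V | SameOrb N v u}

/-- The vertex set of the quotient digraph `Γ_N`: the `N`-orbits. -/
abbrev OrbV (N : Subgroup (Equiv.Perm V)) : Type _ := {S : Set V // ∃ v : V, S = orb N v}

/-- The adjacency relation of the quotient digraph `Γ_N`: `(A,B)` is an arc iff some
`a ∈ A`, `b ∈ B` form an arc of `Γ`. -/
def QRel (A : V → V → Prop) (N : Subgroup (Equiv.Perm V)) (S T : OrbV N) : Prop :=
  ∃ a ∈ S.1, ∃ b ∈ T.1, A a b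

/-- `G/N` (acting via `G`, with `g` sending each orbit to its image) is transitive on the
`i`-geodesics of the quotient digraph `Γ_N` for all `i ≤ s`. -/
def QuotGeoTrans (A : V → V → Prop) (G N : Subgroup (Equiv.Perm V)) (s : ℕ) : Prop :=
  ∀ i ≤ s, ∀ p q : Fin (i + 1) → OrbV N,
    IsGeodesic (QRel A N) i p → IsGeodesic (QRel A N) i q →
      ∃ g ∈ G, ∀ j : Fin (i + 1), ⇑g '' (p j).1 = (q j).1

/-- `G/N` is transitive on the arcs of the quotient digraph `Γ_N`. -/
def QuotArcTrans (A : V → V → Prop) (G N : Subgroup (Equiv.Perm V)) : Prop :=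
  ∀ S T S' T' : OrbV N, QRel A N S T → QRel A N S' T' →
    ∃ g ∈ G, ⇑g '' S.1 = S'.1 ∧ ⇑g '' T.1 = T'.1

/-- `G/N` is quasiprimitive on the `N`-orbits: by the correspondence theorem, the nontrivial
normal subgroups of `G/N` are exactly the `M/N` with `N < M` normal in `G`, and (as `N ≤ M`)
`M/N` is transitive on the `N`-orbits iff `M` is transitive on the vertices. -/
def QuasiprimitiveQuotient (G N : Subgroup (Equiv.Perm V)) : Prop :=
  ∀ M : Subgroup (Equiv.Perm V), NormalIn M G → N < M → SubTrans M

/-- `G/N` is bi-quasiprimitive on the `N`-orbits: every nontrivial normal subgroup `M/N` of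
`G/N` has at most two orbits, and some nontrivial normal subgroup has exactly two orbits. -/
def BiQuasiprimitiveQuotient (G N : Subgroup (Equiv.Perm V)) : Prop :=
  (∀ M : Subgroup (Equiv.Perm V), NormalIn M G → N < M → AtMostTwoOrbits M) ∧
  (∃ M : Subgroup (Equiv.Perm V), NormalIn M G ∧ N < M ∧ ExactlyTwoOrbits M)

/-- The permutation group `G` is quasiprimitive on the vertex set. -/
def Quasiprimitive (G : Subgroup (Equiv.Perm V)) : Prop :=
  SubTrans G ∧ ∀ M : Subgroup (Equiv.Perm V), NormalIn M G → M ≠ ⊥ → SubTrans M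

/-- The permutation group `G` is bi-quasiprimitive on the vertex set. -/
def BiQuasiprimitive (G : Subgroup (Equiv.Perm V)) : Prop :=
  SubTrans G ∧ (∀ M : Subgroup (Equiv.Perm V), NormalIn M G → M ≠ ⊥ → AtMostTwoOrbits M) ∧
  ∃ M : Subgroup (Equiv.Perm V), NormalIn M G ∧ M ≠ ⊥ ∧ ExactlyTwoOrbits M


section Aux

variable {W : Type*}

/-- The set of lengths of directed paths from `u` to `v`. -/
def dset (B : W → W → Prop) (u v : W) : Set ℕ :=
  {n : ℕ | ∃ p : Fin (n + 1) → W, IsArcSeq B n p ∧ p 0 = u ∧ p (Fin.last n) = v}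

lemma ddist_def (B : W → W → Prop) (u v : W) : ddist B u v = sInf (dset B u v) := rfl

lemma zero_mem_dset {B : W → W → Prop} {u v : W} : 0 ∈ dset B u v ↔ u = v := by
  constructor
  · rintro ⟨p, -, h0, hl⟩
    rw [← h0, ← hl, Subsingleton.elim (0 : Fin 1) (Fin.last 0)]
  · rintro rfl
    exact ⟨fun _ => u, fun i => i.elim0, rfl, rfl⟩

lemma one_mem_dset {B : W → W → Prop} {u v : W} : 1 ∈ dset B u v ↔ B u v := by
  constructor
  · rintro ⟨p, hp, h0, hl⟩
    have h := hp 0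
    have e1 : (0 : Fin 1).castSucc = (0 : Fin 2) := by decide
    have e2 : (0 : Fin 1).succ = Fin.last 1 := by decide
    rw [e1, e2, h0, hl] at h
    exact h
  · intro h
    refine ⟨![u, v], ?_, rfl, rfl⟩
    intro i
    fin_cases i
    simpa using h

lemma two_mem_dset {B : W → W → Prop} {u v : W} :
    2 ∈ dset B u v ↔ ∃ w, B u w ∧ B w v := by
  constructor
  · rintro ⟨p, hp, h0, hl⟩
    refine ⟨p 1, ?_, ?_⟩
    · have h := hp 0
      have e1 : (0 : Fin 2).castSucc = (0 : Fin 3) := by decide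
      have e2 : (0 : Fin 2).succ = (1 : Fin 3) := by decide
      rw [e1, e2, h0] at h
      exact h
    · have h := hp 1
      have e1 : (1 : Fin 2).castSucc = (1 : Fin 3) := by decide
      have e2 : (1 : Fin 2).succ = Fin.last 2 := by decide
      rw [e1, e2, hl] at h
      exact h
  · rintro ⟨w, h1, h2⟩
    refine ⟨![u, w, v], ?_, rfl, rfl⟩
    intro i
    fin_cases i
    · simpa using h1
    · simpa using h2

lemma ddist_self (B : W → W → Prop) (u : W) : ddist B u u = 0 :=
  Nat.le_zero.mp (Nat.sInf_le ((zero_mem_dset (B := B)).mpr rfl))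

lemma ddist_eq_one_iff {B : W → W → Prop} {u v : W} :
    ddist B u v = 1 ↔ B u v ∧ u ≠ v := by
  rw [ddist_def]
  constructor
  · intro h
    have hne : (dset B u v).Nonempty := by
      by_contra hc
      rw [Set.not_nonempty_iff_eq_empty] at hc
      rw [hc, Nat.sInf_empty] at h
      omega
    have hmem := Nat.sInf_mem hne
    rw [h] at hmem
    refine ⟨one_mem_dset.mp hmem, fun he => ?_⟩
    have := Nat.sInf_le ((zero_mem_dset (B := B)).mpr he)
    omega
  · rintro ⟨hb, hne⟩
    have h1m : 1 ∈ dset B u v := (one_mem_dset (B := B)).mpr hb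
    have hle := Nat.sInf_le h1m
    have hmem := Nat.sInf_mem (⟨1, h1m⟩ : (dset B u v).Nonempty)
    rcases (by omega : sInf (dset B u v) = 0 ∨ sInf (dset B u v) = 1) with h | h
    · rw [h] at hmem
      exact absurd (zero_mem_dset.mp hmem) hne
    · exact h

lemma ddist_eq_two_iff {B : W → W → Prop} {u v : W} :
    ddist B u v = 2 ↔ (∃ w, B u w ∧ B w v) ∧ ¬ B u v ∧ u ≠ v := by
  rw [ddist_def]
  constructor
  · intro h
    have hne : (dset B u v).Nonempty := by
      by_contra hc
      rw [Set.not_nonempty_iff_eq_empty] at hc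
      rw [hc, Nat.sInf_empty] at h
      omega
    have hmem := Nat.sInf_mem hne
    rw [h] at hmem
    refine ⟨two_mem_dset.mp hmem, fun hb => ?_, fun he => ?_⟩
    · have := Nat.sInf_le ((one_mem_dset (B := B)).mpr hb)
      omega
    · have := Nat.sInf_le ((zero_mem_dset (B := B)).mpr he)
      omega
  · rintro ⟨hw, hnb, hne⟩
    have h2m : 2 ∈ dset B u v := two_mem_dset.mpr hw
    have hle := Nat.sInf_le h2m
    have hmem := Nat.sInf_mem (⟨2, h2m⟩ : (dset B u v).Nonempty)
    rcases (by omega : sInf (dset B u v) = 0 ∨ sInf (dset B u v) = 1 ∨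
        sInf (dset B u v) = 2) with h | h | h
    · rw [h] at hmem
      exact absurd (zero_mem_dset.mp hmem) hne
    · rw [h] at hmem
      exact absurd (one_mem_dset.mp hmem) hnb
    · exact h

lemma isGeodesic_pair {B : W → W → Prop} {u v : W} (h : B u v) (hne : u ≠ v) :
    IsGeodesic B 1 ![u, v] := by
  constructor
  · intro i
    fin_cases i
    simpa using h
  · have e0 : (![u, v] : Fin 2 → W) 0 = u := rfl
    have e1 : (![u, v] : Fin 2 → W) (Fin.last 1) = v := by
      rw [show Fin.last 1 = (1 : Fin 2) from by decide]
      simp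
    rw [e0, e1]
    exact ddist_eq_one_iff.mpr ⟨h, hne⟩

lemma isGeodesic_triple {B : W → W → Prop} {u w v : W} (h1 : B u w) (h2 : B w v)
    (h3 : ¬ B u v) (h4 : u ≠ v) : IsGeodesic B 2 ![u, w, v] := by
  constructor
  · intro i
    fin_cases i
    · simpa using h1
    · simpa using h2
  · have e0 : (![u, w, v] : Fin 3 → W) 0 = u := rfl
    have e1 : (![u, w, v] : Fin 3 → W) (Fin.last 2) = v := by
      rw [show Fin.last 2 = (2 : Fin 3) from by decide]
      simp
    rw [e0, e1]
    exact ddist_eq_two_iff.mpr ⟨⟨w, h1, h2⟩, h3, h4⟩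

lemma geodesic_one_arc {B : W → W → Prop} {p : Fin 2 → W} (hp : IsGeodesic B 1 p) :
    B (p 0) (p 1) := by
  have h := hp.1 0
  have e1 : (0 : Fin 1).castSucc = (0 : Fin 2) := by decide
  have e2 : (0 : Fin 1).succ = (1 : Fin 2) := by decide
  rwa [e1, e2] at h

lemma geodesic_two_data {B : W → W → Prop} {p : Fin 3 → W} (hp : IsGeodesic B 2 p) :
    B (p 0) (p 1) ∧ B (p 1) (p 2) ∧ ¬ B (p 0) (p 2) ∧ p 0 ≠ p 2 := by
  have h01 := hp.1 0
  have h12 := hp.1 1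
  have e1 : (0 : Fin 2).castSucc = (0 : Fin 3) := by decide
  have e2 : (0 : Fin 2).succ = (1 : Fin 3) := by decide
  have e3 : (1 : Fin 2).castSucc = (1 : Fin 3) := by decide
  have e4 : (1 : Fin 2).succ = (2 : Fin 3) := by decide
  rw [e1, e2] at h01
  rw [e3, e4] at h12
  have hd := hp.2
  rw [show Fin.last 2 = (2 : Fin 3) from by decide] at hd
  rw [ddist_eq_two_iff] at hd
  exact ⟨h01, h12, hd.2.1, hd.2.2⟩

end Aux

section OrbAux

lemma sameOrb_refl (N : Subgroup (Equiv.Perm V)) (v : V) : SameOrb N v v :=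
  ⟨1, one_mem N, rfl⟩

lemma sameOrb_symm {N : Subgroup (Equiv.Perm V)} {u v : V} (h : SameOrb N u v) :
    SameOrb N v u := by
  obtain ⟨n, hn, hnu⟩ := h
  exact ⟨n⁻¹, inv_mem hn, by rw [← hnu]; simp⟩

lemma sameOrb_trans {N : Subgroup (Equiv.Perm V)} {u v w : V} (h1 : SameOrb N u v)
    (h2 : SameOrb N v w) : SameOrb N u w := by
  obtain ⟨n, hn, rfl⟩ := h1
  obtain ⟨m, hm, rfl⟩ := h2
  exact ⟨m * n, mul_mem hm hn, rfl⟩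

lemma mem_orb_self (N : Subgroup (Equiv.Perm V)) (v : V) : v ∈ orb N v :=
  sameOrb_refl N v

lemma orb_eq_of_sameOrb {N : Subgroup (Equiv.Perm V)} {x z : V} (h : SameOrb N x z) :
    orb N x = orb N z := by
  ext w
  exact ⟨fun hw => sameOrb_trans (sameOrb_symm h) hw, fun hw => sameOrb_trans h hw⟩

lemma orbV_eq {N : Subgroup (Equiv.Perm V)} (S : OrbV N) {a : V} (ha : a ∈ S.1) :
    S.1 = orb N a := by
  obtain ⟨v, hv⟩ := S.2
  rw [hv] at ha ⊢
  exact orb_eq_of_sameOrb ha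

lemma sameOrb_of_mem {N : Subgroup (Equiv.Perm V)} {S : OrbV N} {a b : V}
    (ha : a ∈ S.1) (hb : b ∈ S.1) : SameOrb N a b := by
  have := orbV_eq S ha
  rw [this] at hb
  exact hb

lemma image_orb {G N : Subgroup (Equiv.Perm V)} (hNG : NormalIn N G) {g : Equiv.Perm V}
    (hg : g ∈ G) (v : V) : ⇑g '' orb N v = orb N (g v) := by
  ext x
  constructor
  · rintro ⟨y, ⟨n, hn, rfl⟩, rfl⟩
    exact ⟨g * n * g⁻¹, hNG.2 g hg n hn, by simp [Equiv.Perm.mul_apply]⟩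
  · rintro ⟨n, hn, rfl⟩
    refine ⟨(g⁻¹ * n * g) v, ⟨g⁻¹ * n * g, ?_, rfl⟩, by simp [Equiv.Perm.mul_apply]⟩
    have := hNG.2 g⁻¹ (inv_mem hg) n hn
    simpa using this

lemma image_orbV {G N : Subgroup (Equiv.Perm V)} (hNG : NormalIn N G) {g : Equiv.Perm V}
    (hg : g ∈ G) (S : OrbV N) {a : V} (ha : a ∈ S.1) : ⇑g '' S.1 = orb N (g a) := by
  rw [orbV_eq S ha, image_orb hNG hg]

lemma vertex_trans {A : V → V → Prop} {G : Subgroup (Equiv.Perm V)}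
    (hgt : GeoTrans A G 2) (u v : V) : ∃ g ∈ G, g u = v := by
  obtain ⟨g, hg, h⟩ := hgt 0 (by norm_num) (fun _ => u) (fun _ => v)
    ⟨fun i => i.elim0, ddist_self A u⟩ ⟨fun i => i.elim0, ddist_self A v⟩
  exact ⟨g, hg, h 0⟩

lemma arc_trans {A : V → V → Prop} {G : Subgroup (Equiv.Perm V)}
    (hA : ∀ u v : V, A u v → ¬ A v u) (hgt : GeoTrans A G 2)
    {u v x y : V} (h1 : A u v) (h2 : A x y) : ∃ g ∈ G, g u = x ∧ g v = y := by
  have hne1 : u ≠ v := by rintro rfl; exact hA u u h1 h1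
  have hne2 : x ≠ y := by rintro rfl; exact hA x x h2 h2
  obtain ⟨g, hg, h⟩ := hgt 1 (by norm_num) ![u, v] ![x, y]
    (isGeodesic_pair h1 hne1) (isGeodesic_pair h2 hne2)
  have h0 := h 0
  have h1' := h 1
  simp only [Matrix.cons_val_zero, Matrix.cons_val_one, Matrix.head_cons] at h0 h1'
  exact ⟨g, hg, h0, h1'⟩

end OrbAux

/-- **Corollary 1.2.** Let `Γ` be a finite connected `(G,2)`-geodesic-transitive but not
`(G,2)`-arc-transitive digraph, and let `N` be a normal subgroup of `G` maximal with respect to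
having at least `2` orbits on the vertices. Then `G/N` is quasiprimitive on the vertex set of
`Γ_N`, and `Γ_N` is either a connected `(G/N,2)`-geodesic-transitive digraph or a connected
`G/N`-arc-transitive undirected complete graph. -/
theorem corollary_reduction {V : Type*} [Fintype V] (A : V → V → Prop)
    (G N : Subgroup (Equiv.Perm V))
    (hA : ∀ u v : V, A u v → ¬ A v u)
    (hconn : DConnected A)
    (hGaut : AutActs A G)
    (hgt : GeoTrans A G 2)
    (hnat : ¬ TwoArcTrans A G)
    (hNG : NormalIn N G)
    (h2 : ∃ u v : V, ¬ SameOrb N u v)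
    (hmax : ∀ M : Subgroup (Equiv.Perm V), NormalIn M G → N < M → SubTrans M) :
    QuasiprimitiveQuotient G N ∧
    ((DConnected (QRel A N) ∧ (∀ S T : OrbV N, QRel A N S T → ¬ QRel A N T S) ∧
        QuotGeoTrans A G N 2) ∨
      (DConnected (QRel A N) ∧ (∀ S T : OrbV N, S ≠ T → QRel A N S T) ∧
        QuotArcTrans A G N)) := by
  classical
  have hirr : ∀ v : V, ¬ A v v := fun v h => hA v v h h
  have hNsubG := hNG.1
  refine ⟨hmax, ?_⟩
  have hrep : ∀ S : OrbV N, ∃ a, a ∈ S.1 := by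
    rintro ⟨s, v, rfl⟩
    exact ⟨v, mem_orb_self N v⟩
  -- quotient connectivity
  have hqconn : DConnected (QRel A N) := by
    intro S T
    obtain ⟨a, ha⟩ := hrep S
    obtain ⟨b, hb⟩ := hrep T
    have key : ∀ u v : V, Relation.ReflTransGen (fun x y => A x y ∨ A y x) u v →
        Relation.ReflTransGen (fun X Y : OrbV N => QRel A N X Y ∨ QRel A N Y X)
          ⟨orb N u, u, rfl⟩ ⟨orb N v, v, rfl⟩ := by
      intro u v h
      induction h with
      | refl => exact .refl
      | tail _ hstep ih =>
          refine ih.tail ?_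
          rcases hstep with h | h
          · exact Or.inl ⟨_, mem_orb_self N _, _, mem_orb_self N _, h⟩
          · exact Or.inr ⟨_, mem_orb_self N _, _, mem_orb_self N _, h⟩
    have hS : S = ⟨orb N a, a, rfl⟩ := Subtype.ext (orbV_eq S ha)
    have hT : T = ⟨orb N b, b, rfl⟩ := Subtype.ext (orbV_eq T hb)
    rw [hS, hT]
    exact key a b (hconn a b)
  -- quotient arc-transitivity
  have hqat : QuotArcTrans A G N := by
    rintro S T S' T' ⟨a, ha, b, hb, hab⟩ ⟨a', ha', b', hb', hab'⟩
    obtain ⟨g, hg, hga, hgb⟩ := arc_trans hA hgt hab hab'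
    refine ⟨g, hg, ?_, ?_⟩
    · rw [image_orbV hNG hg S ha, hga, ← orbV_eq S' ha']
    · rw [image_orbV hNG hg T hb, hgb, ← orbV_eq T' hb']
  -- lifting a quotient 2-geodesic configuration to a 2-geodesic of Γ
  have hlift : ∀ S T U : OrbV N, QRel A N S T → QRel A N T U → ¬ QRel A N S U → S ≠ U →
      ∃ a b c, a ∈ S.1 ∧ b ∈ T.1 ∧ c ∈ U.1 ∧ A a b ∧ A b c ∧ ¬ A a c ∧ a ≠ c := by
    rintro S T U ⟨a, ha, b, hb, hab⟩ ⟨b', hb', c', hc', hbc⟩ hSU hne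
    obtain ⟨n, hn, hnb⟩ := sameOrb_of_mem hb' hb
    have hcU : n c' ∈ U.1 := by
      rw [orbV_eq U hc']
      exact ⟨n, hn, rfl⟩
    refine ⟨a, b, n c', ha, hb, hcU, hab, ?_, ?_, ?_⟩
    · rw [← hnb]
      exact (hGaut n (hNsubG hn) b' c').mp hbc
    · intro h
      exact hSU ⟨a, ha, n c', hcU, h⟩
    · intro h
      apply hne
      apply Subtype.ext
      rw [orbV_eq S ha, h, orbV_eq U hcU]
  -- quotient 2-geodesic-transitivity (holds unconditionally)
  have hqgt : QuotGeoTrans A G N 2 := by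
    intro i hi p q hp hq
    interval_cases i
    · obtain ⟨a, ha⟩ := hrep (p 0)
      obtain ⟨b, hb⟩ := hrep (q 0)
      obtain ⟨g, hg, hgab⟩ := vertex_trans hgt a b
      refine ⟨g, hg, fun j => ?_⟩
      fin_cases j
      show ⇑g '' (p 0).1 = (q 0).1
      rw [image_orbV hNG hg (p 0) ha, hgab, ← orbV_eq (q 0) hb]
    · obtain ⟨a, ha, b, hb, hab⟩ := geodesic_one_arc hp
      obtain ⟨a', ha', b', hb', hab'⟩ := geodesic_one_arc hq
      obtain ⟨g, hg, hga, hgb⟩ := arc_trans hA hgt hab hab'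
      refine ⟨g, hg, fun j => ?_⟩
      fin_cases j
      · show ⇑g '' (p 0).1 = (q 0).1
        rw [image_orbV hNG hg (p 0) ha, hga, ← orbV_eq (q 0) ha']
      · show ⇑g '' (p 1).1 = (q 1).1
        rw [image_orbV hNG hg (p 1) hb, hgb, ← orbV_eq (q 1) hb']
    · obtain ⟨hp01, hp12, hp02, hpne⟩ := geodesic_two_data hp
      obtain ⟨hq01, hq12, hq02, hqne⟩ := geodesic_two_data hq
      obtain ⟨a, b, c, ha, hb, hc, hab, hbc, hac, hane⟩ := hlift _ _ _ hp01 hp12 hp02 hpne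
      obtain ⟨a', b', c', ha', hb', hc', hab', hbc', hac', hane'⟩ :=
        hlift _ _ _ hq01 hq12 hq02 hqne
      obtain ⟨g, hg, hmap⟩ := hgt 2 le_rfl ![a, b, c] ![a', b', c']
        (isGeodesic_triple hab hbc hac hane) (isGeodesic_triple hab' hbc' hac' hane')
      have h0 : g a = a' := by simpa using hmap 0
      have h1 : g b = b' := by simpa using hmap 1
      have h2' : g c = c' := by simpa using hmap 2
      refine ⟨g, hg, fun j => ?_⟩
      fin_cases j
      · show ⇑g '' (p 0).1 = (q 0).1
        rw [image_orbV hNG hg (p 0) ha, h0, ← orbV_eq (q 0) ha']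
      · show ⇑g '' (p 1).1 = (q 1).1
        rw [image_orbV hNG hg (p 1) hb, h1, ← orbV_eq (q 1) hb']
      · show ⇑g '' (p 2).1 = (q 2).1
        rw [image_orbV hNG hg (p 2) hc, h2', ← orbV_eq (q 2) hc']
  by_cases hanti : ∀ S T : OrbV N, QRel A N S T → ¬ QRel A N T S
  · exact Or.inl ⟨hqconn, hanti, hqgt⟩
  push_neg at hanti
  obtain ⟨S₀, T₀, hST₀, hTS₀⟩ := hanti
  -- in this case QRel is symmetric
  have hsym : ∀ P Q : OrbV N, QRel A N P Q → QRel A N Q P := by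
    rintro P Q ⟨p, hp, q, hq, hpq⟩
    obtain ⟨a, ha, b, hb, hab⟩ := hST₀
    obtain ⟨x, hx, y, hy, hxy⟩ := hTS₀
    obtain ⟨g, hg, hga, hgb⟩ := arc_trans hA hgt hab hpq
    refine ⟨g x, ?_, g y, ?_, (hGaut g hg x y).mp hxy⟩
    · rw [orbV_eq Q hq, ← hgb, ← image_orb hNG hg]
      exact ⟨x, by rw [← orbV_eq T₀ hb]; exact hx, rfl⟩
    · rw [orbV_eq P hp, ← hga, ← image_orb hNG hg]
      exact ⟨y, by rw [← orbV_eq S₀ ha]; exact hy, rfl⟩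
  -- the quotient is complete
  have hcomp : ∀ S T : OrbV N, S ≠ T → QRel A N S T := by
    by_contra hcon
    push_neg at hcon
    obtain ⟨S, U, hSUne, hSU⟩ := hcon
    -- find a quotient 2-geodesic
    have hfind : ∃ X T' Y : OrbV N,
        QRel A N X T' ∧ QRel A N T' Y ∧ ¬ QRel A N X Y ∧ X ≠ Y := by
      have main : ∀ Z : OrbV N,
          Relation.ReflTransGen (fun X Y : OrbV N => QRel A N X Y ∨ QRel A N Y X) S Z →
          ¬ (Z = S ∨ QRel A N S Z) →
          ∃ X T' Y : OrbV N, QRel A N X T' ∧ QRel A N T' Y ∧ ¬ QRel A N X Y ∧ X ≠ Y := by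
        intro Z hZ
        induction hZ with
        | refl => exact fun h => absurd (Or.inl rfl) h
        | @tail W Z' hSW' hstep ih =>
            intro hnP
            by_cases hPW : W = S ∨ QRel A N S W
            · have hWZ' : QRel A N W Z' := by
                rcases hstep with h | h
                · exact h
                · exact hsym _ _ h
              rcases hPW with rfl | hSW
              · exact absurd (Or.inr hWZ') hnP
              · refine ⟨S, W, Z', hSW, hWZ', fun h => hnP (Or.inr h),
                  fun h => hnP (Or.inl h.symm)⟩
            · exact ih hPW
      refine main U (hqconn S U) ?_
      push_neg
      exact ⟨fun h => hSUne h.symm, hSU⟩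
    obtain ⟨X, T, Y, h1, h2, h3, h4⟩ := hfind
    obtain ⟨a, b, c, ha, hb, hc', hab, hbc, hac, hane⟩ := hlift X T Y h1 h2 h3 h4
    -- no 2-geodesic of Γ can have endpoints in one orbit
    have hkey : ∀ x y z : V, A x y → A y z → ¬ A x z → x ≠ z → ¬ SameOrb N x z := by
      intro x y z hxy hyz hxz hxzne hsame
      obtain ⟨g, hg, hmap⟩ := hgt 2 le_rfl ![a, b, c] ![x, y, z]
        (isGeodesic_triple hab hbc hac hane) (isGeodesic_triple hxy hyz hxz hxzne)
      have h0 : g a = x := by simpa using hmap 0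
      have h2' : g c = z := by simpa using hmap 2
      apply h4
      apply Subtype.ext
      rw [orbV_eq X ha, orbV_eq Y hc']
      have e1 : ⇑g '' orb N a = orb N x := by rw [image_orb hNG hg, h0]
      have e2 : ⇑g '' orb N c = orb N z := by rw [image_orb hNG hg, h2']
      have e3 : ⇑g '' orb N a = ⇑g '' orb N c := by
        rw [e1, e2]
        exact orb_eq_of_sameOrb hsame
      exact Set.image_injective.mpr g.injective e3
    -- use the two-way pair S₀ T₀ to build a same-orbit 2-geodesic configuration
    obtain ⟨a₀, ha₀, b₀, hb₀, hab₀⟩ := hST₀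
    obtain ⟨x₀, hx₀, y₀, hy₀, hxy₀⟩ := hTS₀
    obtain ⟨n, hn, hna⟩ := sameOrb_of_mem ha₀ hy₀
    have harc2 : A y₀ (n b₀) := by
      rw [← hna]
      exact (hGaut n (hNsubG hn) a₀ b₀).mp hab₀
    have hin : n b₀ ∈ T₀.1 := by
      rw [orbV_eq T₀ hb₀]
      exact ⟨n, hn, rfl⟩
    have hsame0 : SameOrb N x₀ (n b₀) := sameOrb_of_mem hx₀ hin
    have hx0nb : A x₀ (n b₀) := by
      by_cases h1 : x₀ = n b₀
      · rw [← h1] at harc2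
        exact absurd hxy₀ (hA _ _ harc2)
      · by_cases h2 : A x₀ (n b₀)
        · exact h2
        · exact absurd hsame0 (hkey x₀ y₀ (n b₀) hxy₀ harc2 h2 h1)
    obtain ⟨m, hm, hmu⟩ := hsame0
    have hstep : ∀ k : ℕ, A ((m ^ k) (n b₀)) ((m ^ (k + 1)) (n b₀)) := by
      intro k
      have h0 : A (n b₀) (m (n b₀)) := by
        have := (hGaut m (hNsubG hm) x₀ (n b₀)).mp hx0nb
        rwa [hmu] at this
      have h' := (hGaut (m ^ k) (hNsubG (pow_mem hm k)) (n b₀) (m (n b₀))).mp h0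
      have e : (m ^ k) (m (n b₀)) = (m ^ (k + 1)) (n b₀) := by
        rw [pow_succ]
        simp [Equiv.Perm.mul_apply]
      rwa [e] at h'
    have hall : ∀ k : ℕ, A x₀ ((m ^ k) (n b₀)) := by
      intro k
      induction k with
      | zero => simpa using hx0nb
      | succ k ih =>
          by_cases h1 : x₀ = (m ^ (k + 1)) (n b₀)
          · exfalso
            apply hA _ _ ih
            rw [h1]
            exact hstep k
          · by_cases h2 : A x₀ ((m ^ (k + 1)) (n b₀))
            · exact h2
            · exfalso
              have horb : SameOrb N x₀ ((m ^ (k + 1)) (n b₀)) := by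
                refine sameOrb_of_mem hx₀ ?_
                rw [orbV_eq T₀ hin]
                exact ⟨m ^ (k + 1), pow_mem hm _, rfl⟩
              exact hkey x₀ ((m ^ k) (n b₀)) ((m ^ (k + 1)) (n b₀)) ih (hstep k) h2 h1 horb
    have hmne : m ≠ 1 := by
      rintro rfl
      simp only [Equiv.Perm.coe_one, id_eq] at hmu
      rw [← hmu] at hx0nb
      exact hirr x₀ hx0nb
    have hord : 0 < orderOf m := orderOf_pos m
    have hpow : m ^ (orderOf m - 1) = m⁻¹ := by
      have h1 : m ^ (orderOf m - 1) * m = 1 := by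
        rw [← pow_succ]
        have e : orderOf m - 1 + 1 = orderOf m := by omega
        rw [e, pow_orderOf_eq_one]
      exact eq_inv_of_mul_eq_one_left h1
    have hfin := hall (orderOf m - 1)
    rw [hpow] at hfin
    have e : m⁻¹ (n b₀) = x₀ := by
      rw [← hmu]
      simp
    rw [e] at hfin
    exact hirr x₀ hfin
  exact Or.inr ⟨hqconn, hcomp, hqat⟩

end SGeodesicDigraph
end

section
/- Let Γ be a finite (G,2)-geodesic-transitive digraph of valency r ≥ 3, and let (u,v) be an arc of Γ. Suppose the subdigraph of Γ induced on Γ^+(u) is isomorphic to k disjoint copies of a connected digraph Σ, where k ≥ 1 and Σ has at least 3 vertices. Then |Γ^+(u) ∩ Γ^+(v)| ≠ 1. -/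
namespace SGeodesicDigraph

variable {V : Type*}

lemma arcSeq_pair {A : V → V → Prop} {a b : V} (h : A a b) : IsArcSeq A 1 ![a, b] := by
  intro i
  fin_cases i
  simpa using h

lemma arcSeq_triple {A : V → V → Prop} {a b c : V} (h1 : A a b) (h2 : A b c) :
    IsArcSeq A 2 ![a, b, c] := by
  intro i
  fin_cases i
  · simpa using h1
  · simpa using h2

lemma ddist_eq_one (A : V → V → Prop) (hA : ∀ a b : V, A a b → ¬ A b a)
    {a b : V} (h : A a b) : ddist A a b = 1 := by
  have hne : a ≠ b := by rintro rfl; exact hA a a h h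
  refine le_antisymm (Nat.sInf_le ⟨![a, b], arcSeq_pair h, rfl, rfl⟩) ?_
  refine le_csInf ⟨1, ![a, b], arcSeq_pair h, rfl, rfl⟩ ?_
  rintro m ⟨p, hp, h0, hl⟩
  rcases Nat.eq_zero_or_pos m with rfl | hm
  · exact absurd (h0 ▸ hl ▸ rfl) hne
  · exact hm

lemma ddist_eq_two (A : V → V → Prop) {a b c : V}
    (h1 : A a b) (h2 : A b c) (h3 : ¬ A a c) (h4 : a ≠ c) : ddist A a c = 2 := by
  refine le_antisymm (Nat.sInf_le ⟨![a, b, c], arcSeq_triple h1 h2, rfl, rfl⟩) ?_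
  refine le_csInf ⟨2, ![a, b, c], arcSeq_triple h1 h2, rfl, rfl⟩ ?_
  rintro m ⟨p, hp, h0, hl⟩
  match m, p, hp, h0, hl with
  | 0, p, hp, h0, hl => exact absurd (h0 ▸ hl ▸ rfl) h4
  | 1, p, hp, h0, hl =>
    have := hp 0
    rw [show (Fin.castSucc 0 : Fin 2) = 0 from rfl, show (Fin.succ 0 : Fin 2) = Fin.last 1 from rfl,
      h0, hl] at this
    exact absurd this h3
  | (n + 2), p, hp, h0, hl => omega

/-- **Lemma 4.4.** Let `Γ` be a finite `(G,2)`-geodesic-transitive digraph of valency `r ≥ 3`,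
let `(u,v)` be an arc, and suppose the subdigraph induced on `Γ⁺(u)` is isomorphic to `k`
disjoint copies (`k ≥ 1`) of a connected digraph `Σ` with at least `3` vertices. Then
`|Γ⁺(u) ∩ Γ⁺(v)| ≠ 1`. -/
theorem induced_copies_common_outnbr {V : Type*} [Fintype V] (A : V → V → Prop)
    (G : Subgroup (Equiv.Perm V)) (r : ℕ)
    (hA : ∀ u v : V, A u v → ¬ A v u)
    (hGaut : AutActs A G)
    (hval : HasValency A r) (hr : 3 ≤ r)
    (hgt : GeoTrans A G 2)
    (u v : V) (huv : A u v)
    {W : Type*} [Fintype W] (B : W → W → Prop) (k : ℕ) (hk : 1 ≤ k)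
    (hB : ∀ x y : W, B x y → ¬ B y x)
    (hBconn : DConnected B)
    (hW : 3 ≤ Fintype.card W)
    (e : {w : V // A u w} ≃ Fin k × W)
    (he : ∀ x y : {w : V // A u w},
      A x.1 y.1 ↔ ((e x).1 = (e y).1 ∧ B (e x).2 (e y).2)) :
    ({w : V | A u w} ∩ {w : V | A v w}).ncard ≠ 1 := by
  intro hcard
  obtain ⟨w, hw⟩ := Set.ncard_eq_one.mp hcard
  have hwmem : w ∈ ({x : V | A u x} ∩ {x : V | A v x}) := hw ▸ rfl
  obtain ⟨hAuw, hAvw⟩ := hwmem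
  -- arc transitivity from 1-geodesic transitivity
  have arcT : ∀ a b x y : V, A a b → A x y → ∃ g ∈ G, g a = x ∧ g b = y := by
    intro a b x y hab hxy
    obtain ⟨g, hg, hj⟩ := hgt 1 (by norm_num) ![a, b] ![x, y]
      ⟨arcSeq_pair hab, by simpa using ddist_eq_one A hA hab⟩
      ⟨arcSeq_pair hxy, by simpa using ddist_eq_one A hA hxy⟩
    exact ⟨g, hg, by simpa using hj 0, by simpa using hj 1⟩
  -- map the arc (u,v) to the arc (v,w); let t be the image of w
  obtain ⟨g2, hg2, hg2u, hg2v⟩ := arcT u v v w huv hAvw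
  set t := g2 w with ht
  have hAvt : A v t := by rw [← hg2u]; exact (hGaut g2 hg2 u w).mp hAuw
  have hAwt : A w t := by rw [← hg2v]; exact (hGaut g2 hg2 v w).mp hAvw
  -- map the arc (v,t) to the arc (v,w); let s be the image of w
  obtain ⟨g1, hg1, hg1v, hg1t⟩ := arcT v t v w hAvt hAvw
  set s := g1 w with hs
  have hAvs : A v s := by rw [← hg1v]; exact (hGaut g1 hg1 v w).mp hAvw
  have hAsw : A s w := by rw [← hg1t]; exact (hGaut g1 hg1 w t).mp hAwt
  -- t and s are not out-neighbours of u, and differ from u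
  have hnAut : ¬ A u t := by
    intro h
    have : t ∈ ({x : V | A u x} ∩ {x : V | A v x}) := ⟨h, hAvt⟩
    rw [hw, Set.mem_singleton_iff] at this
    exact hA w t (this ▸ hAwt) (this ▸ hAwt)
  have hnAus : ¬ A u s := by
    intro h
    have : s ∈ ({x : V | A u x} ∩ {x : V | A v x}) := ⟨h, hAvs⟩
    rw [hw, Set.mem_singleton_iff] at this
    exact hA s w hAsw (this ▸ (this ▸ hAsw))
  have hut : u ≠ t := fun h => hA u v huv (h ▸ hAvt)
  have hus : u ≠ s := fun h => hA u v huv (h ▸ hAvs)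
  -- (u,v,t) and (u,v,s) are 2-geodesics; map one to the other
  obtain ⟨g, hg, hj⟩ := hgt 2 le_rfl ![u, v, t] ![u, v, s]
    ⟨arcSeq_triple huv hAvt, by simpa using ddist_eq_two A huv hAvt hnAut hut⟩
    ⟨arcSeq_triple huv hAvs, by simpa using ddist_eq_two A huv hAvs hnAus hus⟩
  have hju : g u = u := by simpa using hj 0
  have hjv : g v = v := by simpa using hj 1
  have hjt : g t = s := by simpa using hj 2
  -- g fixes w, the unique common out-neighbour of u and v
  have hgw : g w = w := by
    have h1 : A u (g w) := by rw [← hju]; exact (hGaut g hg u w).mp hAuw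
    have h2 : A v (g w) := by rw [← hjv]; exact (hGaut g hg v w).mp hAvw
    have : g w ∈ ({x : V | A u x} ∩ {x : V | A v x}) := ⟨h1, h2⟩
    rwa [hw, Set.mem_singleton_iff] at this
  -- but then A w s, contradicting A s w
  have : A w s := by rw [← hgw, ← hjt]; exact (hGaut g hg w t).mp hAwt
  exact hA w s this hAsw

end SGeodesicDigraph
end
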